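/- arXiv:2109.12642 — 5 statements merged into one kernel-verified Lean document; each statement's English description precedes it below -/
import Mathlib

section
/- Let n ≥ 2, let G be a K_{n+1}-free simple graph on a vertex set V, let ι be an index type, and let a : ι → Fin n → V be such that a i s is adjacent to a j t if and only if i ≠ j and s ≠ t. Then for any n pairwise distinct indices i_0, …, i_{n−1} ∈ ι there is no vertex x of G that is adjacent to a i_ℓ s for every ℓ < n and every s < n. (Hence the family of conditions "x is a common neighbor of column i", i ∈ ι, is n-inconsistent.) -/
/-- If `G` is a `K_{n+1}`-free graph and `a : ι → Fin n → V` is an array whose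
adjacency holds exactly between entries in distinct columns and distinct rows,
then for any `n` pairwise distinct column indices there is no common neighbor
of all the entries of these columns. -/
theorem statement1 {V ι : Type*} (n : ℕ) (hn : 2 ≤ n) (G : SimpleGraph V)
    (hfree : G.CliqueFree (n + 1)) (a : ι → Fin n → V)
    (ha : ∀ (i j : ι) (s t : Fin n), G.Adj (a i s) (a j t) ↔ (i ≠ j ∧ s ≠ t))
    (idx : Fin n → ι) (hidx : Function.Injective idx) :
    ¬ ∃ x : V, ∀ (ℓ : Fin n) (s : Fin n), G.Adj x (a (idx ℓ) s) := by
  rintro ⟨x, hx⟩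
  set f : Fin (n + 1) → V := Fin.cons x (fun ℓ => a (idx ℓ) ℓ) with hf
  have hadj : ∀ i j : Fin (n + 1), i ≠ j → G.Adj (f i) (f j) := by
    intro i j hij
    rcases Fin.eq_zero_or_eq_succ i with rfl | ⟨i', rfl⟩ <;>
      rcases Fin.eq_zero_or_eq_succ j with rfl | ⟨j', rfl⟩
    · exact absurd rfl hij
    · simpa [hf] using hx j' j'
    · simpa [hf] using (hx i' i').symm
    · have hij' : i' ≠ j' := fun h => hij (by rw [h])
      simp only [hf, Fin.cons_succ]
      exact (ha _ _ _ _).2 ⟨fun h => hij' (hidx h), hij'⟩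
  have hinj : Function.Injective f := fun i j h => by
    by_contra hne
    exact (hadj i j hne).ne h
  exact hfree (Finset.univ.map ⟨f, hinj⟩)
    ⟨by
      intro u hu v hv huv
      simp only [Finset.mem_coe, Finset.mem_map, Finset.mem_univ, true_and,
        Function.Embedding.coeFn_mk] at hu hv
      obtain ⟨i, rfl⟩ := hu
      obtain ⟨j, rfl⟩ := hv
      exact hadj i j (fun h => huv (by rw [h])),
     by simp⟩
end

section
/- Let n ≥ 2 and let G be a simple graph on a countably infinite vertex set V such that G is K_{n+1}-free and satisfies the K_{n+1}-free extension property. Then there exists a map a : ℕ → Fin n → V, injective as a function of the pair (i,s), such that a i s is adjacent to a j t if and only if i ≠ j and s ≠ t. -/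
/-- `G` satisfies the `K_{n+1}`-free extension property: for all finite disjoint
`A, B` such that `A` contains no `n` pairwise adjacent vertices, there is a vertex
outside `A ∪ B` adjacent to every vertex of `A` and to no vertex of `B`. -/
def KFreeExtensionProperty {V : Type*} (G : SimpleGraph V) (n : ℕ) : Prop :=
  ∀ A B : Finset V, Disjoint A B →
    (¬ ∃ f : Fin n → V, (∀ i, f i ∈ A) ∧ ∀ i j, i ≠ j → G.Adj (f i) (f j)) →
    ∃ v : V, v ∉ A ∧ v ∉ B ∧ (∀ a ∈ A, G.Adj v a) ∧ (∀ b ∈ B, ¬ G.Adj v b)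

section Aux

variable {V : Type*} (n : ℕ) (G : SimpleGraph V)

attribute [local instance] Classical.propDecidable
noncomputable local instance : DecidableEq V := Classical.decEq V

def extCond (A B : Finset V) (v : V) : Prop :=
  v ∉ A ∧ v ∉ B ∧ (∀ a ∈ A, G.Adj v a) ∧ (∀ b ∈ B, ¬ G.Adj v b)

noncomputable def extChoice [Nonempty V] (A B : Finset V) : V :=
  if h : ∃ v, extCond G A B v then h.choose else Classical.arbitrary V

lemma extChoice_spec [Nonempty V] {A B : Finset V} (h : ∃ v, extCond G A B v) :
    extCond G A B (extChoice G A B) := by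
  rw [extChoice, dif_pos h]; exact h.choose_spec

noncomputable def Aset (k : ℕ) (prev : Fin k → V) : Finset V :=
  (Finset.univ.filter (fun m : Fin k => (m : ℕ) / n ≠ k / n ∧ (m : ℕ) % n ≠ k % n)).image prev

noncomputable def Bset (k : ℕ) (prev : Fin k → V) : Finset V :=
  (Finset.univ.image prev) \ Aset n k prev

noncomputable def bseq [Nonempty V] : ℕ → V
  | k => extChoice G (Aset n (k) (fun m : Fin k => bseq (m : ℕ)))
      (Bset n k (fun m : Fin k => bseq (m : ℕ)))
termination_by k => k
decreasing_by all_goals exact m.isLt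

lemma bseq_eq [Nonempty V] (k : ℕ) :
    bseq n G k = extChoice G (Aset n k (fun m : Fin k => bseq n G (m : ℕ)))
      (Bset n k (fun m : Fin k => bseq n G (m : ℕ))) := by
  rw [bseq]

lemma main [Nonempty V] (hn : 2 ≤ n) (hext : KFreeExtensionProperty G n) :
    ∀ k, (∀ m l, m < k → l < k → bseq n G m = bseq n G l → m = l) ∧
      (∀ m l, m < k → l < k →
        (G.Adj (bseq n G m) (bseq n G l) ↔ m / n ≠ l / n ∧ m % n ≠ l % n)) := by
  have hnpos : 0 < n := by omega
  intro k
  induction k with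
  | zero => exact ⟨fun m l hm => absurd hm (Nat.not_lt_zero m), fun m l hm => absurd hm (Nat.not_lt_zero m)⟩
  | succ k ih =>
    obtain ⟨ihinj, ihadj⟩ := ih
    set prev : Fin k → V := fun m : Fin k => bseq n G (m : ℕ) with hprev
    set A := Aset n k prev with hA
    set B := Bset n k prev with hB
    have hdisj : Disjoint A B := Finset.disjoint_sdiff
    -- A is K_n-free
    have hAfree : ¬ ∃ f : Fin n → V, (∀ i, f i ∈ A) ∧ ∀ i j, i ≠ j → G.Adj (f i) (f j) := by
      rintro ⟨f, hfA, hfadj⟩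
      -- pick indices
      have hex : ∀ i : Fin n, ∃ m : Fin k, ((m : ℕ) / n ≠ k / n ∧ (m : ℕ) % n ≠ k % n) ∧ prev m = f i := by
        intro i
        have := hfA i
        rw [hA, Aset, Finset.mem_image] at this
        obtain ⟨m, hm, hmeq⟩ := this
        rw [Finset.mem_filter] at hm
        exact ⟨m, hm.2, hmeq⟩
      choose m hm hmeq using hex
      have hginj : ∀ i j : Fin n, i ≠ j → (m i : ℕ) % n ≠ (m j : ℕ) % n := by
        intro i j hij
        have hb : ∀ i, bseq n G ((m i : ℕ)) = f i := fun i => hmeq i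
        have hadj : G.Adj (bseq n G (m i : ℕ)) (bseq n G (m j : ℕ)) := by
          rw [hb i, hb j]; exact hfadj i j hij
        exact ((ihadj _ _ (m i).isLt (m j).isLt).1 hadj).2
      -- pigeonhole
      have hmaps : ∀ i : Fin n, (m i : ℕ) % n ∈ (Finset.range n).erase (k % n) := by
        intro i
        exact Finset.mem_erase.2 ⟨hm i |>.2, Finset.mem_range.2 (Nat.mod_lt _ hnpos)⟩
      have hcard := Finset.card_le_card_of_injOn (s := (Finset.univ : Finset (Fin n)))
        (f := fun i : Fin n => (m i : ℕ) % n) (fun i _ => hmaps i) (fun i _ j _ h => by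
          by_contra hij; exact hginj i j hij h)
      rw [Finset.card_erase_of_mem (Finset.mem_range.2 (Nat.mod_lt _ hnpos)),
        Finset.card_range, Finset.card_univ, Fintype.card_fin] at hcard
      omega
    have hexv := hext A B hdisj hAfree
    have hcond : extCond G A B (bseq n G k) := by
      rw [bseq_eq]
      exact extChoice_spec G hexv
    obtain ⟨hnotA, hnotB, hadjA, hadjB⟩ := hcond
    -- membership facts
    have hmemAB : ∀ m, m < k → bseq n G m ∈ A ∨ bseq n G m ∈ B := by
      intro m hmk
      have : bseq n G m ∈ Finset.univ.image prev :=
        Finset.mem_image.2 ⟨⟨m, hmk⟩, Finset.mem_univ _, rfl⟩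
      by_cases hA' : bseq n G m ∈ A
      · exact Or.inl hA'
      · exact Or.inr (Finset.mem_sdiff.2 ⟨this, hA'⟩)
    have hne : ∀ m, m < k → bseq n G k ≠ bseq n G m := by
      intro m hmk heq
      rcases hmemAB m hmk with h | h
      · exact hnotA (heq ▸ h)
      · exact hnotB (heq ▸ h)
    -- membership in A characterization
    have hmemA : ∀ m, m < k → (bseq n G m ∈ A ↔ (m / n ≠ k / n ∧ m % n ≠ k % n)) := by
      intro m hmk
      constructor
      · intro h
        rw [hA, Aset, Finset.mem_image] at h
        obtain ⟨l, hl, hleq⟩ := h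
        rw [Finset.mem_filter] at hl
        have : (l : ℕ) = m := ihinj _ _ l.isLt hmk hleq
        rw [this] at hl
        exact hl.2
      · intro h
        rw [hA, Aset, Finset.mem_image]
        exact ⟨⟨m, hmk⟩, Finset.mem_filter.2 ⟨Finset.mem_univ _, h⟩, rfl⟩
    -- adjacency of new vertex
    have hadjnew : ∀ m, m < k →
        (G.Adj (bseq n G k) (bseq n G m) ↔ (k / n ≠ m / n ∧ k % n ≠ m % n)) := by
      intro m hmk
      by_cases h : m / n ≠ k / n ∧ m % n ≠ k % n
      · have := hadjA _ ((hmemA m hmk).2 h)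
        constructor
        · intro _; exact ⟨h.1.symm, h.2.symm⟩
        · intro _; exact this
      · have hBmem : bseq n G m ∈ B := by
          rcases hmemAB m hmk with h' | h'
          · exact absurd ((hmemA m hmk).1 h') h
          · exact h'
        have := hadjB _ hBmem
        constructor
        · intro ha; exact absurd ha this
        · intro hc; exfalso; exact h ⟨fun e => hc.1 e.symm, fun e => hc.2 e.symm⟩
    constructor
    · intro m l hm hl heq
      rcases Nat.lt_succ_iff_lt_or_eq.1 hm with hm' | rfl
      · rcases Nat.lt_succ_iff_lt_or_eq.1 hl with hl' | rfl
        · exact ihinj m l hm' hl' heq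
        · exact absurd heq.symm (hne m hm')
      · rcases Nat.lt_succ_iff_lt_or_eq.1 hl with hl' | rfl
        · exact absurd heq (hne l hl')
        · rfl
    · intro m l hm hl
      rcases Nat.lt_succ_iff_lt_or_eq.1 hm with hm' | rfl
      · rcases Nat.lt_succ_iff_lt_or_eq.1 hl with hl' | rfl
        · exact ihadj m l hm' hl'
        · rw [G.adj_comm]
          rw [hadjnew m hm']
          constructor
          · rintro ⟨h1, h2⟩; exact ⟨fun e => h1 e.symm, fun e => h2 e.symm⟩
          · rintro ⟨h1, h2⟩; exact ⟨fun e => h1 e.symm, fun e => h2 e.symm⟩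
      · rcases Nat.lt_succ_iff_lt_or_eq.1 hl with hl' | rfl
        · exact hadjnew l hl'
        · simp only [ne_eq, not_true_eq_false, false_and, iff_false]
          exact G.loopless.irrefl _
    
end Aux

/-- In a countably infinite `K_{n+1}`-free graph with the `K_{n+1}`-free extension
property there is an array `a : ℕ → Fin n → V`, injective in the pair of indices,
whose adjacency holds exactly between entries in distinct columns and distinct rows. -/
theorem statement2 {V : Type*} [Countable V] [Infinite V] (n : ℕ) (hn : 2 ≤ n)
    (G : SimpleGraph V) (hfree : G.CliqueFree (n + 1))
    (hext : KFreeExtensionProperty G n) :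
    ∃ a : ℕ → Fin n → V,
      Function.Injective (fun p : ℕ × Fin n => a p.1 p.2) ∧
      ∀ (i j : ℕ) (s t : Fin n), G.Adj (a i s) (a j t) ↔ (i ≠ j ∧ s ≠ t) := by
  have hnpos : 0 < n := by omega
  have hinj : ∀ m l, bseq n G m = bseq n G l → m = l := by
    intro m l h
    exact (main n G hn hext (max m l + 1)).1 m l (by omega) (by omega) h
  have hadj : ∀ m l, G.Adj (bseq n G m) (bseq n G l) ↔ m / n ≠ l / n ∧ m % n ≠ l % n := by
    intro m l
    exact (main n G hn hext (max m l + 1)).2 m l (by omega) (by omega)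
  refine ⟨fun i s => bseq n G ((s : ℕ) + n * i), ?_, ?_⟩
  · rintro ⟨i, s⟩ ⟨j, t⟩ h
    simp only at h
    have := hinj _ _ h
    have hs : (s : ℕ) = t ∧ i = j := by
      have h1 : ((s : ℕ) + n * i) % n = ((t : ℕ) + n * j) % n := by rw [this]
      have h2 : ((s : ℕ) + n * i) / n = ((t : ℕ) + n * j) / n := by rw [this]
      rw [Nat.add_mul_mod_self_left, Nat.add_mul_mod_self_left,
        Nat.mod_eq_of_lt s.isLt, Nat.mod_eq_of_lt t.isLt] at h1
      rw [Nat.add_mul_div_left _ _ hnpos, Nat.add_mul_div_left _ _ hnpos,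
        Nat.div_eq_of_lt s.isLt, Nat.div_eq_of_lt t.isLt] at h2
      omega
    exact Prod.ext hs.2 (Fin.ext hs.1)
  · intro i j s t
    rw [hadj]
    rw [Nat.add_mul_mod_self_left, Nat.add_mul_mod_self_left,
      Nat.mod_eq_of_lt s.isLt, Nat.mod_eq_of_lt t.isLt,
      Nat.add_mul_div_left _ _ hnpos, Nat.add_mul_div_left _ _ hnpos,
      Nat.div_eq_of_lt s.isLt, Nat.div_eq_of_lt t.isLt]
    simp only [zero_add, ne_eq]
    constructor
    · rintro ⟨h1, h2⟩
      exact ⟨h1, fun e => h2 (by rw [e])⟩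
    · rintro ⟨h1, h2⟩
      exact ⟨h1, fun e => h2 (Fin.ext e)⟩
end

section
/- Let n ≥ 2 and let G be a simple graph on a countably infinite vertex set V such that G is K_{n+1}-free and satisfies the K_{n+1}-free extension property. Then there exists a map a : ℕ → Fin n → V such that: (a) for every i ∈ ℕ there exists a vertex x adjacent to a i s for every s < n; and (b) for any n pairwise distinct indices i_0, …, i_{n−1} ∈ ℕ there is no vertex x adjacent to a i_ℓ s for every ℓ < n and every s < n. (Each "column condition" is individually satisfiable but the family of column conditions is n-inconsistent.) -/
/-- `m` is an index of a vertex built before step `k` lying in a strictly earlier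
column and a different slot. -/
def goodIdx (n k m : ℕ) : Prop := m < (k / n) * n ∧ m % n ≠ k % n

/-- A sequence of vertices built by recursion: the `k`-th vertex is chosen (via
`Classical.epsilon`) distinct from all earlier ones, adjacent exactly to the
earlier vertices at a `goodIdx` position. -/
noncomputable def seqAux {V : Type*} [Nonempty V] (G : SimpleGraph V) (n : ℕ) : ℕ → V
  | k => Classical.epsilon (fun x : V =>
      (∀ m, m < k → x ≠ seqAux G n m) ∧
      (∀ m, m < k → goodIdx n k m → G.Adj x (seqAux G n m)) ∧
      (∀ m, m < k → ¬ goodIdx n k m → ¬ G.Adj x (seqAux G n m)))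
  termination_by k => k

lemma seqAux_spec {V : Type*} [Nonempty V] (G : SimpleGraph V) (n : ℕ) (hn : 2 ≤ n)
    (hext : KFreeExtensionProperty G n) (k : ℕ) :
    (∀ m, m < k → seqAux G n k ≠ seqAux G n m) ∧
    (∀ m, m < k → goodIdx n k m → G.Adj (seqAux G n k) (seqAux G n m)) ∧
    (∀ m, m < k → ¬ goodIdx n k m → ¬ G.Adj (seqAux G n k) (seqAux G n m)) := by
  classical
  induction k using Nat.strong_induction_on with
  | _ k ih =>
    have npos : 0 < n := by omega
    -- injectivity on earlier indices
    have hinj : ∀ m m', m < k → m' < k → seqAux G n m = seqAux G n m' → m = m' := by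
      intro m m' hm hm' he
      rcases lt_trichotomy m m' with h | h | h
      · exact absurd he.symm ((ih m' hm').1 m h)
      · exact h
      · exact absurd he ((ih m hm).1 m' h)
    set A : Finset V := ((Finset.range k).filter (fun m => goodIdx n k m)).image (seqAux G n) with hA
    set B : Finset V := ((Finset.range k).filter (fun m => ¬ goodIdx n k m)).image (seqAux G n) with hB
    have hdisj : Disjoint A B := by
      rw [Finset.disjoint_left]
      intro x hxA hxB
      obtain ⟨m, hm, hme⟩ := Finset.mem_image.mp hxA
      obtain ⟨m', hm', hme'⟩ := Finset.mem_image.mp hxB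
      simp only [Finset.mem_filter, Finset.mem_range] at hm hm'
      have : m = m' := hinj m m' hm.1 hm'.1 (hme.trans hme'.symm)
      exact hm'.2 (this ▸ hm.2)
    have hnoclique : ¬ ∃ f : Fin n → V, (∀ i, f i ∈ A) ∧ ∀ i j, i ≠ j → G.Adj (f i) (f j) := by
      rintro ⟨f, hfA, hfadj⟩
      -- pick indices
      have hpick : ∀ i : Fin n, ∃ m, m < k ∧ goodIdx n k m ∧ seqAux G n m = f i := by
        intro i
        obtain ⟨m, hm, hme⟩ := Finset.mem_image.mp (hfA i)
        simp only [Finset.mem_filter, Finset.mem_range] at hm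
        exact ⟨m, hm.1, hm.2, hme⟩
      choose m hmk hmg hme using hpick
      -- residues are pairwise distinct
      have hres : ∀ i j : Fin n, i ≠ j → m i % n ≠ m j % n := by
        intro i j hij
        have hadj : G.Adj (seqAux G n (m i)) (seqAux G n (m j)) := by
          rw [hme i, hme j]; exact hfadj i j hij
        have hmne : m i ≠ m j := by
          intro h; exact hadj.ne (by rw [h])
        rcases lt_or_gt_of_ne hmne with h | h
        · have := (ih (m j) (hmk j)).2.2 (m i) h
          by_contra hc
          rcases Classical.em (goodIdx n (m j) (m i)) with hg | hg
          · exact hg.2 hc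
          · exact this hg hadj.symm
        · have := (ih (m i) (hmk i)).2.2 (m j) h
          by_contra hc
          rcases Classical.em (goodIdx n (m i) (m j)) with hg | hg
          · exact hg.2 hc.symm
          · exact this hg hadj
      -- map to Fin n is injective hence surjective
      let g : Fin n → Fin n := fun i => ⟨m i % n, Nat.mod_lt _ npos⟩
      have hginj : Function.Injective g := by
        intro i j h
        by_contra hij
        exact hres i j hij (by simpa [g, Fin.ext_iff] using h)
      have hgsurj := Finite.surjective_of_injective hginj
      obtain ⟨i, hi⟩ := hgsurj ⟨k % n, Nat.mod_lt _ npos⟩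
      have : m i % n = k % n := by simpa [g, Fin.ext_iff] using hi
      exact (hmg i).2 this
    obtain ⟨v, hvA, hvB, hvadj, hvnadj⟩ := hext A B hdisj hnoclique
    have hmem : ∀ m, m < k → goodIdx n k m → seqAux G n m ∈ A := by
      intro m hm hg
      exact Finset.mem_image.mpr ⟨m, Finset.mem_filter.mpr ⟨Finset.mem_range.mpr hm, hg⟩, rfl⟩
    have hmem' : ∀ m, m < k → ¬ goodIdx n k m → seqAux G n m ∈ B := by
      intro m hm hg
      exact Finset.mem_image.mpr ⟨m, Finset.mem_filter.mpr ⟨Finset.mem_range.mpr hm, hg⟩, rfl⟩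
    have hP : ∃ x : V,
        (∀ m, m < k → x ≠ seqAux G n m) ∧
        (∀ m, m < k → goodIdx n k m → G.Adj x (seqAux G n m)) ∧
        (∀ m, m < k → ¬ goodIdx n k m → ¬ G.Adj x (seqAux G n m)) := by
      refine ⟨v, ?_, ?_, ?_⟩
      · intro m hm he
        rcases Classical.em (goodIdx n k m) with hg | hg
        · exact hvA (he ▸ hmem m hm hg)
        · exact hvB (he ▸ hmem' m hm hg)
      · intro m hm hg; exact hvadj _ (hmem m hm hg)
      · intro m hm hg; exact hvnadj _ (hmem' m hm hg)
    have heq : seqAux G n k = Classical.epsilon (fun x : V =>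
        (∀ m, m < k → x ≠ seqAux G n m) ∧
        (∀ m, m < k → goodIdx n k m → G.Adj x (seqAux G n m)) ∧
        (∀ m, m < k → ¬ goodIdx n k m → ¬ G.Adj x (seqAux G n m))) := by
      rw [seqAux]
    rw [heq]
    exact Classical.epsilon_spec hP

lemma idx_div {n : ℕ} (i : ℕ) (s : Fin n) (hn : 0 < n) : (n * i + s.val) / n = i := by
  rw [Nat.mul_add_div hn, Nat.div_eq_of_lt s.isLt, Nat.add_zero]

lemma idx_mod {n : ℕ} (i : ℕ) (s : Fin n) : (n * i + s.val) % n = s.val := by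
  rw [Nat.mul_add_mod, Nat.mod_eq_of_lt s.isLt]

lemma adj_cross {V : Type*} [Nonempty V] {G : SimpleGraph V} {n : ℕ}
    (hn : 2 ≤ n) (hext : KFreeExtensionProperty G n)
    {i j : ℕ} {s t : Fin n} (hij : i ≠ j) (hst : s ≠ t) :
    G.Adj (seqAux G n (n * i + s.val)) (seqAux G n (n * j + t.val)) := by
  have hn0 : 0 < n := by omega
  rcases lt_or_gt_of_ne hij with h | h
  · refine ((seqAux_spec G n hn hext (n * j + t.val)).2.1 (n * i + s.val)
      (by nlinarith [s.isLt, t.isLt]) ?_).symm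
    rw [goodIdx, idx_div j t hn0, idx_mod, idx_mod]
    constructor
    · calc n * i + s.val < n * (i + 1) := by nlinarith [s.isLt]
        _ ≤ n * j := by nlinarith
        _ = j * n := Nat.mul_comm _ _
    · exact fun he => hst (Fin.ext he)
  · refine (seqAux_spec G n hn hext (n * i + s.val)).2.1 (n * j + t.val)
      (by nlinarith [s.isLt, t.isLt]) ?_
    rw [goodIdx, idx_div i s hn0, idx_mod, idx_mod]
    constructor
    · calc n * j + t.val < n * (j + 1) := by nlinarith [t.isLt]
        _ ≤ n * i := by nlinarith
        _ = i * n := Nat.mul_comm _ _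
    · exact fun he => hst (Fin.ext he.symm)

lemma nonadj_col {V : Type*} [Nonempty V] {G : SimpleGraph V} {n : ℕ}
    (hn : 2 ≤ n) (hext : KFreeExtensionProperty G n)
    {i : ℕ} {s t : Fin n} (hst : s ≠ t) :
    ¬ G.Adj (seqAux G n (n * i + s.val)) (seqAux G n (n * i + t.val)) := by
  have hn0 : 0 < n := by omega
  have key : ∀ s t : Fin n, s.val < t.val →
      ¬ G.Adj (seqAux G n (n * i + t.val)) (seqAux G n (n * i + s.val)) := by
    intro s t h
    refine (seqAux_spec G n hn hext (n * i + t.val)).2.2 (n * i + s.val) (by omega) ?_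
    rw [goodIdx, idx_div i t hn0]
    rintro ⟨h1, -⟩
    have : i * n = n * i := Nat.mul_comm _ _
    omega
  rcases lt_or_gt_of_ne (fun h => hst (Fin.ext h) : s.val ≠ t.val) with h | h
  · intro ha; exact key s t h ha.symm
  · exact key t s h

/-- In a countably infinite `K_{n+1}`-free graph with the `K_{n+1}`-free extension
property there is an array `a : ℕ → Fin n → V` such that each column has a common
neighbor, but no `n` distinct columns have a common neighbor. -/
theorem statement3 {V : Type*} [Countable V] [Infinite V] (n : ℕ) (hn : 2 ≤ n)
    (G : SimpleGraph V) (hfree : G.CliqueFree (n + 1))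
    (hext : KFreeExtensionProperty G n) :
    ∃ a : ℕ → Fin n → V,
      (∀ i : ℕ, ∃ x : V, ∀ s : Fin n, G.Adj x (a i s)) ∧
      (∀ idx : Fin n → ℕ, Function.Injective idx →
        ¬ ∃ x : V, ∀ (ℓ : Fin n) (s : Fin n), G.Adj x (a (idx ℓ) s)) := by
  classical
  have hn0 : 0 < n := by omega
  refine ⟨fun i s => seqAux G n (n * i + s.val), ?_, ?_⟩
  · intro i
    set A : Finset V := Finset.image (fun s : Fin n => seqAux G n (n * i + s.val)) Finset.univ with hA
    have hnoclique : ¬ ∃ f : Fin n → V, (∀ q, f q ∈ A) ∧ ∀ q r, q ≠ r → G.Adj (f q) (f r) := by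
      rintro ⟨f, hfA, hfadj⟩
      have h01 : (⟨0, by omega⟩ : Fin n) ≠ ⟨1, by omega⟩ := by simp [Fin.ext_iff]
      have hadj := hfadj _ _ h01
      obtain ⟨s, -, hs⟩ := Finset.mem_image.mp (hfA ⟨0, by omega⟩)
      obtain ⟨t, -, ht⟩ := Finset.mem_image.mp (hfA ⟨1, by omega⟩)
      rw [← hs, ← ht] at hadj
      rcases eq_or_ne s t with h | h
      · exact hadj.ne (by rw [h])
      · exact nonadj_col hn hext h hadj
    obtain ⟨v, -, -, hvadj, -⟩ := hext A ∅ (Finset.disjoint_empty_right A) hnoclique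
    exact ⟨v, fun s => hvadj _ (Finset.mem_image.mpr ⟨s, Finset.mem_univ s, rfl⟩)⟩
  · rintro idx hinj ⟨x, hx⟩
    have hemb : (⊤ : SimpleGraph (Fin (n + 1))) ↪g G := by
      set f : Fin (n + 1) → V := Fin.cons x (fun ℓ => seqAux G n (n * idx ℓ + ℓ.val)) with hf
      have hadj : ∀ p q : Fin (n + 1), p ≠ q → G.Adj (f p) (f q) := by
        intro p q hpq
        induction p using Fin.cases with
        | zero =>
          induction q using Fin.cases with
          | zero => exact absurd rfl hpq
          | succ ℓ => simpa [hf] using hx ℓ ℓ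
        | succ ℓ =>
          induction q using Fin.cases with
          | zero => exact (by simpa [hf] using hx ℓ ℓ : G.Adj x _).symm
          | succ ℓ' =>
            have hℓ : ℓ ≠ ℓ' := fun h => hpq (by rw [h])
            simpa [hf] using adj_cross hn hext (fun h => hℓ (hinj h)) hℓ
      refine ⟨⟨f, fun p q h => by_contra fun hne => (hadj p q hne).ne h⟩, ?_⟩
      intro p q
      simp only [Function.Embedding.coeFn_mk, SimpleGraph.top_adj]
      constructor
      · intro h he; rw [he] at h; exact G.irrefl h
      · exact hadj p q
    exact (SimpleGraph.cliqueFree_iff.mp hfree).false hemb.toCopy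
end

section
/- Let n > k ≥ 2 and let H be a (k+1)-uniform hypergraph on a countably infinite vertex set V with no (n+1)-clique, satisfying the (n,k)-extension property. Let t : Fin n → V be injective and suppose no (k+1)-element subset of the range of t belongs to H. Then there exists an injective v : Fin n → V, with range disjoint from the range of t, such that, defining for each k-element subset u of Fin n the n-element set T_u = { t i : i ∉ u } ∪ { v i : i ∈ u }, the following hold: (a) for each such u there exists a vertex x with {x} ∪ s ∈ H for every k-element subset s of T_u; but (b) there is no vertex x such that {x} ∪ s ∈ H for every k-element subset u of Fin n and every k-element subset s of T_u. -/
/-- The `(n,k)`-extension property of a `(k+1)`-uniform hypergraph `H`: for every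
finite `A` and every set `E` of `k`-element subsets of `A` such that no `n`-element
subset `W` of `A` is both an `n`-clique of `H` and has all its `k`-element subsets
in `E`, there is a vertex `x ∉ A` whose hyperedges into `A` are exactly the members
of `E`. -/
def HypExtensionProperty {V : Type*} [DecidableEq V] (H : Set (Finset V)) (n k : ℕ) : Prop :=
  ∀ (A : Finset V) (E : Set (Finset V)),
    (∀ s ∈ E, s ⊆ A ∧ s.card = k) →
    (¬ ∃ W : Finset V, W ⊆ A ∧ W.card = n ∧
      (∀ s ⊆ W, s.card = k + 1 → s ∈ H) ∧ (∀ s ⊆ W, s.card = k → s ∈ E)) →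
    ∃ x : V, x ∉ A ∧ ∀ s ⊆ A, s.card = k → (insert x s ∈ H ↔ s ∈ E)

/-- Auxiliary construction: a partial clique of `m` new vertices with no mixed edges. -/
lemma statement8_aux {V : Type*} [DecidableEq V]
    (n k : ℕ) (hk1 : 1 ≤ k) (hkn : k ≤ n) (H : Set (Finset V))
    (hext : HypExtensionProperty H n k)
    (t : Fin n → V)
    (htfree : ∀ s ⊆ Finset.image t Finset.univ, s.card = k + 1 → s ∉ H)
    (m : ℕ) (hm : m ≤ n) :
    ∃ v : Fin m → V, Function.Injective v ∧ (∀ i j, v i ≠ t j) ∧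
      (∀ s, s ⊆ Finset.image t Finset.univ ∪ Finset.image v Finset.univ →
        s.card = k + 1 → (∃ j, t j ∈ s) → s ∉ H) ∧
      (∀ s, s ⊆ Finset.image v Finset.univ → s.card = k + 1 → s ∈ H) := by
  induction m with
  | zero =>
      refine ⟨Fin.elim0, fun i => i.elim0, fun i => i.elim0, ?_, ?_⟩
      · intro s hs hcard _
        refine htfree s ?_ hcard
        intro y hy
        have := hs hy
        simpa using this
      · intro s hs hcard
        have : s ⊆ ∅ := by
          intro y hy; have := hs hy; simpa using this
        have := Finset.card_le_card this
        simp [hcard] at this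
  | succ m ih =>
      obtain ⟨v, hvinj, hvt, hmix, hcl⟩ := ih (by omega)
      set A : Finset V := Finset.image t Finset.univ ∪ Finset.image v Finset.univ with hA
      set E : Set (Finset V) := {s | s ⊆ Finset.image v Finset.univ ∧ s.card = k} with hE
      obtain ⟨x, hxA, hx⟩ := hext A E
        (fun s hs => ⟨hs.1.trans Finset.subset_union_right, hs.2⟩)
        (by
          rintro ⟨W, hWA, hWcard, hWcl, hWE⟩
          have hWv : W ⊆ Finset.image v Finset.univ := by
            intro w hw
            obtain ⟨s, hws, hsW, hscard⟩ :=
              Finset.exists_subsuperset_card_eq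
                (show ({w} : Finset V) ⊆ W by simpa using hw)
                (by simpa using hk1) (by omega)
            have hsE : s ∈ E := hWE s hsW hscard
            exact hsE.1 (hws (Finset.mem_singleton_self w))
          have h1 : W.card ≤ (Finset.image v Finset.univ).card := Finset.card_le_card hWv
          have h2 : (Finset.image v Finset.univ).card ≤ m := by
            calc (Finset.image v Finset.univ).card ≤ (Finset.univ : Finset (Fin m)).card :=
                  Finset.card_image_le
              _ = m := by simp
          omega)
      have hxv : x ∉ Finset.image v Finset.univ := fun h => hxA (Finset.mem_union_right _ h)
      have hxt : x ∉ Finset.image t Finset.univ := fun h => hxA (Finset.mem_union_left _ h)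
      have htv : ∀ j, t j ∉ Finset.image v Finset.univ := by
        intro j hj
        obtain ⟨i, -, hi⟩ := Finset.mem_image.mp hj
        exact hvt i j hi
      set v' : Fin (m + 1) → V := Fin.snoc v x with hv'
      have himg : Finset.image v' Finset.univ = insert x (Finset.image v Finset.univ) := by
        ext y
        simp only [Finset.mem_image, Finset.mem_insert, Finset.mem_univ, true_and]
        constructor
        · rintro ⟨i, rfl⟩
          induction i using Fin.lastCases with
          | last => left; simp [hv']
          | cast j => right; exact ⟨j, by simp [hv']⟩
        · rintro (rfl | ⟨j, rfl⟩)
          · exact ⟨Fin.last m, by simp [hv']⟩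
          · exact ⟨j.castSucc, by simp [hv']⟩
      have hv'c : ∀ j : Fin m, v' j.castSucc = v j := by intro j; simp [hv']
      have hv'l : v' (Fin.last m) = x := by simp [hv']
      have hvx : ∀ j : Fin m, v j ≠ x := by
        intro j hj
        exact hxv (Finset.mem_image.mpr ⟨j, Finset.mem_univ j, hj⟩)
      have hinj' : Function.Injective v' := by
        intro a b hab
        induction a using Fin.lastCases with
        | last =>
            induction b using Fin.lastCases with
            | last => rfl
            | cast j => rw [hv'l, hv'c] at hab; exact absurd hab.symm (hvx j)
        | cast i =>
            induction b using Fin.lastCases with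
            | last => rw [hv'l, hv'c] at hab; exact absurd hab (hvx i)
            | cast j => rw [hv'c, hv'c] at hab; exact congrArg _ (hvinj hab)
      have hvt' : ∀ i j, v' i ≠ t j := by
        intro i j
        induction i using Fin.lastCases with
        | last =>
            rw [hv'l]
            intro h
            exact hxt (h ▸ Finset.mem_image.mpr ⟨j, Finset.mem_univ j, rfl⟩)
        | cast i => rw [hv'c]; exact hvt i j
      refine ⟨v', hinj', hvt', ?_, ?_⟩
      · -- mixed sets not in H
        intro s hs hcard hts
        rw [himg] at hs
        obtain ⟨j, htj⟩ := hts
        by_cases hxs : x ∈ s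
        · set s' := s.erase x with hs'
          have hs'A : s' ⊆ A := by
            intro y hy
            have hyx : y ≠ x := Finset.ne_of_mem_erase hy
            have hys : y ∈ s := Finset.mem_of_mem_erase hy
            rcases Finset.mem_union.mp (hs hys) with h | h
            · exact Finset.mem_union_left _ h
            · rcases Finset.mem_insert.mp h with h | h
              · exact absurd h hyx
              · exact Finset.mem_union_right _ h
          have hs'card : s'.card = k := by
            rw [hs', Finset.card_erase_of_mem hxs, hcard]; omega
          have htj' : t j ∈ s' := by
            refine Finset.mem_erase.mpr ⟨?_, htj⟩
            intro h
            exact hxt (h ▸ Finset.mem_image.mpr ⟨j, Finset.mem_univ j, rfl⟩)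
          intro hsH
          have : insert x s' ∈ H := by
            rwa [hs', Finset.insert_erase hxs]
          have hs'E : s' ∈ E := (hx s' hs'A hs'card).mp this
          exact htv j (hs'E.1 htj')
        · have hsA : s ⊆ A := by
            intro y hy
            rcases Finset.mem_union.mp (hs hy) with h | h
            · exact Finset.mem_union_left _ h
            · rcases Finset.mem_insert.mp h with h | h
              · exact absurd (h ▸ hy) hxs
              · exact Finset.mem_union_right _ h
          exact hmix s hsA hcard ⟨j, htj⟩
      · -- clique
        intro s hs hcard
        rw [himg] at hs
        by_cases hxs : x ∈ s
        · set s' := s.erase x with hs'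
          have hs'v : s' ⊆ Finset.image v Finset.univ := by
            intro y hy
            have hyx : y ≠ x := Finset.ne_of_mem_erase hy
            have hys : y ∈ s := Finset.mem_of_mem_erase hy
            rcases Finset.mem_insert.mp (hs hys) with h | h
            · exact absurd h hyx
            · exact h
          have hs'card : s'.card = k := by
            rw [hs', Finset.card_erase_of_mem hxs, hcard]; omega
          have : insert x s' ∈ H :=
            (hx s' (hs'v.trans Finset.subset_union_right) hs'card).mpr ⟨hs'v, hs'card⟩
          rwa [hs', Finset.insert_erase hxs] at this
        · have hsv : s ⊆ Finset.image v Finset.univ := by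
            intro y hy
            rcases Finset.mem_insert.mp (hs hy) with h | h
            · exact absurd (h ▸ hy) hxs
            · exact h
          exact hcl s hsv hcard

/-- Combinatorial core of the `c_{n,k}`-unsuperstability of `T_{n,k}`: given an
independent `n`-tuple `t̄`, there is an `n`-clique `v̄` disjoint from it such that,
for the mixed tuples `T_u` (replacing the coordinates in `u` by the corresponding
`v`'s), each demand "`x` forms a hyperedge with every `k`-subset of `T_u`" is
individually satisfiable, but the family over all `k`-element `u` is inconsistent. -/
theorem statement8 {V : Type*} [DecidableEq V] [Countable V] [Infinite V]
    (n k : ℕ) (hk : 2 ≤ k) (hnk : k < n)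
    (H : Set (Finset V)) (huniform : ∀ e ∈ H, e.card = k + 1)
    (hfree : ¬ ∃ W : Finset V, W.card = n + 1 ∧ ∀ s ⊆ W, s.card = k + 1 → s ∈ H)
    (hext : HypExtensionProperty H n k)
    (t : Fin n → V) (ht : Function.Injective t)
    (htfree : ∀ s ⊆ Finset.image t Finset.univ, s.card = k + 1 → s ∉ H) :
    ∃ v : Fin n → V, Function.Injective v ∧ (∀ i j, v i ≠ t j) ∧
      (∀ u : Finset (Fin n), u.card = k →
        ∃ x : V, ∀ s ⊆ Finset.image (fun i => if i ∈ u then v i else t i) Finset.univ,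
          s.card = k → insert x s ∈ H) ∧
      ¬ ∃ x : V, ∀ u : Finset (Fin n), u.card = k →
        ∀ s ⊆ Finset.image (fun i => if i ∈ u then v i else t i) Finset.univ,
          s.card = k → insert x s ∈ H := by
  obtain ⟨v, hvinj, hvt, hmix, hcl⟩ :=
    statement8_aux n k (by omega) (by omega) H hext t htfree n le_rfl
  have htv : ∀ j, t j ∉ Finset.image v Finset.univ := by
    intro j hj
    obtain ⟨i, -, hi⟩ := Finset.mem_image.mp hj
    exact hvt i j hi
  -- injectivity of the mixed map
  have hfinj : ∀ u : Finset (Fin n),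
      Function.Injective (fun i => if i ∈ u then v i else t i) := by
    intro u a b hab
    simp only at hab
    by_cases ha : a ∈ u <;> by_cases hb : b ∈ u <;> simp only [ha, hb, if_true, if_false] at hab
    · exact hvinj hab
    · exact absurd hab (hvt a b)
    · exact absurd hab.symm (hvt b a)
    · exact ht hab
  have hTsub : ∀ u : Finset (Fin n),
      Finset.image (fun i => if i ∈ u then v i else t i) Finset.univ ⊆
        Finset.image t Finset.univ ∪ Finset.image v Finset.univ := by
    intro u y hy
    obtain ⟨i, -, rfl⟩ := Finset.mem_image.mp hy
    by_cases hi : i ∈ u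
    · simp only [hi, if_true]
      exact Finset.mem_union_right _ (Finset.mem_image.mpr ⟨i, Finset.mem_univ i, rfl⟩)
    · simp only [hi, if_false]
      exact Finset.mem_union_left _ (Finset.mem_image.mpr ⟨i, Finset.mem_univ i, rfl⟩)
  have hTcard : ∀ u : Finset (Fin n),
      (Finset.image (fun i => if i ∈ u then v i else t i) Finset.univ).card = n := by
    intro u
    rw [Finset.card_image_of_injective _ (hfinj u)]
    simp
  refine ⟨v, hvinj, hvt, ?_, ?_⟩
  · -- each instance individually consistent
    intro u hu
    set Tu := Finset.image (fun i => if i ∈ u then v i else t i) Finset.univ with hTu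
    obtain ⟨x, -, hx⟩ := hext Tu {s | s ⊆ Tu ∧ s.card = k}
      (fun s hs => ⟨hs.1, hs.2⟩)
      (by
        rintro ⟨W, hWT, hWcard, hWcl, -⟩
        have hWeq : W = Tu := Finset.eq_of_subset_of_card_le hWT (by rw [hWcard, hTcard])
        -- find a k+1 subset of Tu containing a t-vertex
        have hune : u ≠ Finset.univ := by
          intro h
          rw [h, Finset.card_univ] at hu
          simp at hu; omega
        obtain ⟨j, hju⟩ : ∃ j, j ∉ u := by
          by_contra h
          push_neg at h
          exact hune (Finset.eq_univ_iff_forall.mpr h)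
        set s : Finset V := insert (t j) (u.image v) with hsdef
        have htjv : t j ∉ u.image v := by
          intro h
          obtain ⟨i, -, hi⟩ := Finset.mem_image.mp h
          exact hvt i j hi
        have hscard : s.card = k + 1 := by
          rw [hsdef, Finset.card_insert_of_notMem htjv,
            Finset.card_image_of_injective _ hvinj, hu]
        have hsT : s ⊆ Tu := by
          intro y hy
          rcases Finset.mem_insert.mp hy with rfl | hy
          · exact Finset.mem_image.mpr ⟨j, Finset.mem_univ j, by simp [hju]⟩
          · obtain ⟨i, hiu, rfl⟩ := Finset.mem_image.mp hy
            exact Finset.mem_image.mpr ⟨i, Finset.mem_univ i, by simp [hiu]⟩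
        have hsH : s ∈ H := hWcl s (hWeq ▸ hsT) hscard
        exact hmix s (hsT.trans (hTsub u)) hscard ⟨j, Finset.mem_insert_self _ _⟩ hsH)
    exact ⟨x, fun s hs hc => (hx s hs hc).mpr ⟨hs, hc⟩⟩
  · -- family inconsistent
    rintro ⟨x, hx⟩
    have hxv : ∀ j, x ≠ v j := by
      intro j hxj
      obtain ⟨u, hu_sub, hucard⟩ :=
        Finset.exists_subset_card_eq (s := Finset.univ.erase j) (n := k)
          (by rw [Finset.card_erase_of_mem (Finset.mem_univ j), Finset.card_univ]; simp; omega)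
      have hju : j ∉ u := fun h => (Finset.mem_erase.mp (hu_sub h)).1 rfl
      obtain ⟨u', hu'u, hu'card⟩ :=
        Finset.exists_subset_card_eq (s := u) (n := k - 1) (by omega)
      have hju' : j ∉ u' := fun h => hju (hu'u h)
      set s : Finset V := insert (t j) (u'.image v) with hsdef
      have htjv : t j ∉ u'.image v := by
        intro h
        obtain ⟨i, -, hi⟩ := Finset.mem_image.mp h
        exact hvt i j hi
      have hscard : s.card = k := by
        rw [hsdef, Finset.card_insert_of_notMem htjv,
          Finset.card_image_of_injective _ hvinj, hu'card]
        omega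
      have hsT : s ⊆ Finset.image (fun i => if i ∈ u then v i else t i) Finset.univ := by
        intro y hy
        rcases Finset.mem_insert.mp hy with rfl | hy
        · exact Finset.mem_image.mpr ⟨j, Finset.mem_univ j, by simp [hju]⟩
        · obtain ⟨i, hiu', rfl⟩ := Finset.mem_image.mp hy
          exact Finset.mem_image.mpr ⟨i, Finset.mem_univ i, by simp [hu'u hiu']⟩
      have hH : insert x s ∈ H := hx u hucard s hsT hscard
      have hvjs : v j ∉ s := by
        rw [hsdef]
        intro h
        rcases Finset.mem_insert.mp h with h | h
        · exact hvt j j h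
        · obtain ⟨i, hi', hi⟩ := Finset.mem_image.mp h
          exact hju' ((hvinj hi) ▸ hi')
      have hcard' : (insert x s).card = k + 1 := by
        rw [hxj, Finset.card_insert_of_notMem hvjs, hscard]
      have hsub' : insert x s ⊆ Finset.image t Finset.univ ∪ Finset.image v Finset.univ := by
        intro y hy
        rcases Finset.mem_insert.mp hy with rfl | hy
        · exact Finset.mem_union_right _
            (hxj ▸ Finset.mem_image.mpr ⟨j, Finset.mem_univ j, rfl⟩)
        · exact (hsT.trans (hTsub u)) hy
      exact hmix (insert x s) hsub' hcard'
        ⟨j, Finset.mem_insert_of_mem (Finset.mem_insert_self _ _)⟩ hH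
    have hxvimg : x ∉ Finset.image v Finset.univ := by
      intro h
      obtain ⟨i, -, hi⟩ := Finset.mem_image.mp h
      exact hxv i hi.symm
    refine hfree ⟨insert x (Finset.image v Finset.univ), ?_, ?_⟩
    · rw [Finset.card_insert_of_notMem hxvimg,
        Finset.card_image_of_injective _ hvinj]
      simp
    · intro s hsW hscard
      by_cases hxs : x ∈ s
      · set s' := s.erase x with hs'
        have hs'v : s' ⊆ Finset.image v Finset.univ := by
          intro y hy
          have hyx : y ≠ x := Finset.ne_of_mem_erase hy
          rcases Finset.mem_insert.mp (hsW (Finset.mem_of_mem_erase hy)) with h | h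
          · exact absurd h hyx
          · exact h
        have hs'card : s'.card = k := by
          rw [hs', Finset.card_erase_of_mem hxs, hscard]; omega
        set w : Finset (Fin n) := Finset.univ.filter (fun i => v i ∈ s') with hw
        have himgw : Finset.image v w = s' := by
          ext y
          simp only [Finset.mem_image, hw, Finset.mem_filter, Finset.mem_univ, true_and]
          constructor
          · rintro ⟨i, hi, rfl⟩; exact hi
          · intro hy
            obtain ⟨i, -, rfl⟩ := Finset.mem_image.mp (hs'v hy)
            exact ⟨i, hy, rfl⟩
        have hwcard : w.card = k := by
          rw [← hs'card, ← himgw, Finset.card_image_of_injective _ hvinj]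
        have hs'T : s' ⊆ Finset.image (fun i => if i ∈ w then v i else t i) Finset.univ := by
          intro y hy
          obtain ⟨i, -, rfl⟩ := Finset.mem_image.mp (hs'v hy)
          have hiw : i ∈ w := by
            rw [hw]; simp only [Finset.mem_filter, Finset.mem_univ, true_and]; exact hy
          exact Finset.mem_image.mpr ⟨i, Finset.mem_univ i, by simp [hiw]⟩
        have : insert x s' ∈ H := hx w hwcard s' hs'T hs'card
        rwa [hs', Finset.insert_erase hxs] at this
      · have hsv : s ⊆ Finset.image v Finset.univ := by
          intro y hy
          rcases Finset.mem_insert.mp (hsW hy) with h | h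
          · exact absurd (h ▸ hy) hxs
          · exact h
        exact hcl s hsv hscard
end

section
/- Let n > k ≥ 2 and let H be a (k+1)-uniform hypergraph on a countably infinite vertex set V with no (n+1)-clique, satisfying the (n,k)-extension property. Let C_1, …, C_m be pairwise disjoint finite subsets of V and, for each i ≤ m, let F_i be a set of k-element subsets of C_i such that no n-element subset W of C_i satisfies both (every (k+1)-element subset of W belongs to H) and (every k-element subset of W belongs to F_i). Then there exists a vertex x ∉ C_1 ∪ … ∪ C_m such that {x} ∪ s ∈ H for every s ∈ F_1 ∪ … ∪ F_m, and moreover {x} ∪ s ∉ H for every other k-element subset s of C_1 ∪ … ∪ C_m. -/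
/-- Column-by-column consistent families of edge-demands are jointly satisfiable:
given pairwise disjoint finite columns `C i` and, for each `i`, a family `F i` of
`k`-element subsets of `C i` containing no `n`-clique obstruction, there is a vertex
`x` outside all columns whose hyperedges into the union of the columns are exactly
the members of the `F i`. -/
theorem statement9 {V : Type*} [DecidableEq V] [Countable V] [Infinite V]
    (n k m : ℕ) (hk : 2 ≤ k) (hnk : k < n)
    (H : Set (Finset V)) (huniform : ∀ e ∈ H, e.card = k + 1)
    (hfree : ¬ ∃ W : Finset V, W.card = n + 1 ∧ ∀ s ⊆ W, s.card = k + 1 → s ∈ H)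
    (hext : HypExtensionProperty H n k)
    (C : Fin m → Finset V) (hdisj : Pairwise fun i j => Disjoint (C i) (C j))
    (F : Fin m → Set (Finset V))
    (hF : ∀ i, ∀ s ∈ F i, s ⊆ C i ∧ s.card = k)
    (hcons : ∀ i, ¬ ∃ W : Finset V, W ⊆ C i ∧ W.card = n ∧
      (∀ s ⊆ W, s.card = k + 1 → s ∈ H) ∧ (∀ s ⊆ W, s.card = k → s ∈ F i)) :
    ∃ x : V, (∀ i, x ∉ C i) ∧
      (∀ i, ∀ s ∈ F i, insert x s ∈ H) ∧
      (∀ s : Finset V, s ⊆ Finset.univ.biUnion C → s.card = k →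
        (∀ i, s ∉ F i) → insert x s ∉ H) := by
  set A : Finset V := Finset.univ.biUnion C with hA
  set E : Set (Finset V) := {s | ∃ i, s ∈ F i} with hE
  have hEA : ∀ s ∈ E, s ⊆ A ∧ s.card = k := by
    rintro s ⟨i, hi⟩
    obtain ⟨hsub, hcard⟩ := hF i s hi
    exact ⟨hsub.trans (fun v hv => Finset.mem_biUnion.2 ⟨i, Finset.mem_univ i, hv⟩), hcard⟩
  -- key: no obstruction in A
  have hnoobs : ¬ ∃ W : Finset V, W ⊆ A ∧ W.card = n ∧
      (∀ s ⊆ W, s.card = k + 1 → s ∈ H) ∧ (∀ s ⊆ W, s.card = k → s ∈ E) := by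
    rintro ⟨W, hWA, hWcard, hWcl, hWE⟩
    have hWne : W.Nonempty := by
      rw [← Finset.card_pos, hWcard]; omega
    obtain ⟨a, haW⟩ := hWne
    -- every b ∈ W shares a column with a
    have hcol : ∀ b ∈ W, ∃ i, a ∈ C i ∧ b ∈ C i := by
      intro b hbW
      have h2 : ({a, b} : Finset V) ⊆ W := by
        intro v hv; simp only [Finset.mem_insert, Finset.mem_singleton] at hv
        rcases hv with rfl | rfl <;> assumption
      have hc2 : ({a, b} : Finset V).card ≤ k :=
        le_trans (Finset.card_insert_le _ _) (by simp; omega)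
      obtain ⟨s, hs1, hs2, hs3⟩ := Finset.exists_subsuperset_card_eq h2 hc2
        (by rw [hWcard]; omega)
      obtain ⟨i, hsF⟩ := hWE s hs2 hs3
      have hsC := (hF i s hsF).1
      exact ⟨i, hsC (hs1 (by simp)), hsC (hs1 (by simp))⟩
    obtain ⟨i0, hai0, _⟩ := hcol a haW
    have huniq : ∀ i, a ∈ C i → i = i0 := by
      intro i hi
      by_contra hne
      simpa using (hdisj hne).le_bot (Finset.mem_inter.2 ⟨hi, hai0⟩)
    have hWC : W ⊆ C i0 := by
      intro b hbW
      obtain ⟨i, hai, hbi⟩ := hcol b hbW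
      rwa [huniq i hai] at hbi
    refine hcons i0 ⟨W, hWC, hWcard, hWcl, ?_⟩
    intro s hsW hscard
    obtain ⟨i, hsF⟩ := hWE s hsW hscard
    have hsne : s.Nonempty := by rw [← Finset.card_pos, hscard]; omega
    obtain ⟨c, hcs⟩ := hsne
    have hci : c ∈ C i := (hF i s hsF).1 hcs
    have hci0 : c ∈ C i0 := hWC (hsW hcs)
    have : i = i0 := by
      by_contra hne
      simpa using (hdisj hne).le_bot (Finset.mem_inter.2 ⟨hci, hci0⟩)
    rwa [this] at hsF
  obtain ⟨x, hxA, hx⟩ := hext A E hEA hnoobs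
  refine ⟨x, ?_, ?_, ?_⟩
  · intro i hxi
    exact hxA (Finset.mem_biUnion.2 ⟨i, Finset.mem_univ i, hxi⟩)
  · intro i s hs
    obtain ⟨hsub, hcard⟩ := hEA s ⟨i, hs⟩
    exact (hx s hsub hcard).2 ⟨i, hs⟩
  · intro s hsA hscard hnF hxsH
    obtain ⟨i, hi⟩ := (hx s hsA hscard).1 hxsH
    exact hnF i hi
end
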